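/- arXiv:1311.6430 — 8 statements merged into one kernel-verified Lean document; each statement's English description precedes it below -/
import Mathlib

section
/- The matrix A is invertible and the maximum-column-sum norm of its inverse equals one: |||A⁻¹|||₁ = 1 (Theorem 2, Property 2). -/
open Matrix Finset

/-!
The column sums of `A` equal `1` and its off-diagonal entries are nonpositive, so `A` is strictly
diagonally dominant by columns and hence invertible. Its inverse `B` is entrywise nonnegative: if
`B i m < 0` were the least entry of row `i`, then `(B * A) i m ≤ B i m * ∑ k, A k m < 0`, contradicting
`B * A = 1`. Finally `1ᵀ A = 1ᵀ` gives `1ᵀ A⁻¹ = 1ᵀ`, so every column of `|A⁻¹|` sums to `1`.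
-/

namespace Matrix

variable {ι R : Type*} [Fintype ι] [DecidableEq ι]

theorem sum_apply_eq_one_of_diag_eq [AddCommGroup R] [One R] {A : Matrix ι ι R}
    (hdiag : ∀ i, A i i = 1 - ∑ j ∈ univ.erase i, A j i) (j : ι) : ∑ i, A i j = 1 := by
  rw [← add_sum_erase _ _ (mem_univ j), hdiag j, sub_add_cancel]

theorem sum_apply_eq_one_of_mul_eq_one [CommRing R] {A B : Matrix ι ι R} (hAB : A * B = 1)
    (hA : ∀ j, ∑ i, A i j = 1) (j : ι) : ∑ i, B i j = 1 := by
  have hA' : (1 : ι → R) ᵥ* A = 1 := funext fun j => by simp [vecMul, one_dotProduct, hA]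
  have := congrFun (vecMul_vecMul 1 A B) j
  simpa [hAB, hA', vecMul, one_dotProduct, one_apply] using this

theorem det_ne_zero_of_offDiag_nonpos_of_sum_pos {A : Matrix ι ι ℝ}
    (hoff : ∀ i j, i ≠ j → A i j ≤ 0) (hsum : ∀ j, 0 < ∑ i, A i j) : A.det ≠ 0 := by
  refine det_ne_zero_of_sum_col_lt_diag fun k => ?_
  have hoff_abs : ∑ i ∈ univ.erase k, ‖A i k‖ = -∑ i ∈ univ.erase k, A i k := by
    rw [← sum_neg_distrib]
    exact sum_congr rfl fun i hi => abs_of_nonpos (hoff i k (ne_of_mem_erase hi))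
  have hoff_sum : ∑ i ∈ univ.erase k, A i k ≤ 0 :=
    sum_nonpos fun i hi => hoff i k (ne_of_mem_erase hi)
  have hcol := hsum k
  rw [← add_sum_erase _ _ (mem_univ k)] at hcol
  rw [hoff_abs, Real.norm_eq_abs, abs_of_pos (by linarith)]
  linarith

theorem nonneg_of_mul_eq_one_of_offDiag_nonpos [CommRing R] [LinearOrder R] [IsStrictOrderedRing R]
    {A B : Matrix ι ι R} (hBA : B * A = 1) (hoff : ∀ i j, i ≠ j → A i j ≤ 0)
    (hsum : ∀ j, 0 < ∑ i, A i j) (i j : ι) : 0 ≤ B i j := by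
  by_contra! hneg
  obtain ⟨m, -, hm⟩ := exists_min_image univ (B i) ⟨j, mem_univ j⟩
  have hmneg : B i m < 0 := (hm j (mem_univ j)).trans_lt hneg
  have hle : (B * A) i m ≤ B i m * ∑ k, A k m := by
    rw [mul_apply, mul_sum]
    refine sum_le_sum fun k _ => ?_
    rcases eq_or_ne k m with rfl | hk
    · exact le_rfl
    · exact mul_le_mul_of_nonpos_right (hm k (mem_univ k)) (hoff k m hk)
  have hprod_nonneg : 0 ≤ (B * A) i m := by
    rw [hBA, one_apply]; split_ifs <;> norm_num
  linarith [mul_neg_of_neg_of_pos hmneg (hsum m)]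

end Matrix

/-- **Theorem 2, Property 2.** If `A` is an `n × n` real matrix (`n ≥ 1`) whose
off-diagonal entries are nonpositive and whose diagonal entries satisfy
`A i i = 1 - ∑_{j ≠ i} A j i`, then `A` is invertible and the maximum-column-sum
norm of `A⁻¹` equals one: `|||A⁻¹|||₁ = max_j ∑_i |A⁻¹ i j| = 1`. -/
theorem matrix_column_stochastic_M_matrix_inv_one_norm
    (n : ℕ) (hn : 1 ≤ n) (A : Matrix (Fin n) (Fin n) ℝ)
    (hoff : ∀ i j, i ≠ j → A i j ≤ 0)
    (hdiag : ∀ i, A i i = 1 - ∑ j ∈ Finset.univ.erase i, A j i) :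
    IsUnit A ∧
      Finset.univ.sup' (Finset.univ_nonempty_iff.mpr (Fin.pos_iff_nonempty.mp hn))
        (fun j => ∑ i, |A⁻¹ i j|) = 1 := by
  have hsum := sum_apply_eq_one_of_diag_eq hdiag
  have hsum_pos : ∀ j, 0 < ∑ i, A i j := fun j => by simp [hsum]
  have hdet : IsUnit A.det := (det_ne_zero_of_offDiag_nonpos_of_sum_pos hoff hsum_pos).isUnit
  have hinv_nonneg := nonneg_of_mul_eq_one_of_offDiag_nonpos (nonsing_inv_mul A hdet) hoff hsum_pos
  have hinv_sum := sum_apply_eq_one_of_mul_eq_one (mul_nonsing_inv A hdet) hsum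
  refine ⟨(isUnit_iff_isUnit_det A).mpr hdet, ?_⟩
  simp_rw [abs_of_nonneg (hinv_nonneg _ _), hinv_sum]
  exact sup'_const _ _
end

section
/- The maximum-column-sum norm of Ā is strictly less than one: |||Ā|||₁ < 1. -/
open Matrix Finset

/-!
Off the diagonal, column `j` of `Ā` is `-A i j / A j j ≥ 0` and its diagonal entry vanishes,
so its absolute column sum is `(∑_{i ≠ j} -A i j) / A j j = (A j j - 1) / A j j`, which is `< 1`
because `A j j ≥ 1 > 0`.
-/

namespace Matrix

variable {m ι K : Type*} [Fintype ι] [DecidableEq ι] [Field K]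

theorem inv_diagonal_of_ne_zero {d : ι → K} (hd : ∀ i, d i ≠ 0) :
    (diagonal d)⁻¹ = diagonal d⁻¹ :=
  inv_eq_right_inv <| by
    rw [diagonal_mul_diagonal, ← diagonal_one]
    exact congrArg diagonal (funext fun i => mul_inv_cancel₀ (hd i))

theorem mul_inv_diagonal_apply {d : ι → K} (hd : ∀ i, d i ≠ 0) (M : Matrix m ι K)
    (i : m) (j : ι) :
    (M * (diagonal d)⁻¹) i j = M i j / d j := by
  rw [inv_diagonal_of_ne_zero hd, mul_diagonal, Pi.inv_apply, div_eq_mul_inv]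

end Matrix

section ColumnSumOne

variable {ι : Type*} [Fintype ι] [DecidableEq ι] {A : Matrix ι ι ℝ}

theorem sum_erase_neg_col_eq_diag_sub_one
    (hdiag : ∀ i, A i i = 1 - ∑ j ∈ univ.erase i, A j i) (j : ι) :
    ∑ i ∈ univ.erase j, -A i j = A j j - 1 := by
  rw [sum_neg_distrib, hdiag j]
  ring

theorem one_le_diag_of_offDiag_nonpos (hoff : ∀ i j, i ≠ j → A i j ≤ 0)
    (hdiag : ∀ i, A i i = 1 - ∑ j ∈ univ.erase i, A j i) (j : ι) : 1 ≤ A j j := by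
  have hnonneg : 0 ≤ ∑ i ∈ univ.erase j, -A i j :=
    sum_nonneg fun i hi => neg_nonneg.mpr (hoff i j (ne_of_mem_erase hi))
  linarith [sum_erase_neg_col_eq_diag_sub_one hdiag j]

theorem sum_abs_diagonal_diag_sub_apply (hoff : ∀ i j, i ≠ j → A i j ≤ 0)
    (hdiag : ∀ i, A i i = 1 - ∑ j ∈ univ.erase i, A j i) (j : ι) :
    ∑ i, |(diagonal (fun i => A i i) - A) i j| = A j j - 1 := by
  have hoffdiag : ∀ i ∈ univ.erase j, |(diagonal (fun i => A i i) - A) i j| = -A i j := by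
    intro i hi
    have hij := ne_of_mem_erase hi
    rw [Matrix.sub_apply, diagonal_apply_ne _ hij, zero_sub,
      abs_of_nonneg (neg_nonneg.mpr (hoff i j hij))]
  rw [← add_sum_erase _ _ (mem_univ j), sum_congr rfl hoffdiag,
    sum_erase_neg_col_eq_diag_sub_one hdiag j, Matrix.sub_apply, diagonal_apply_eq, sub_self,
    abs_zero, zero_add]

end ColumnSumOne

/-- Let `A` be an `n × n` real matrix (`n ≥ 1`) with nonpositive off-diagonal entries
whose diagonal entries satisfy `A i i = 1 - ∑_{j ≠ i} A j i`.  With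
`D = diag(A 1 1, …, A n n)` and `Ā = (D - A) * D⁻¹`, the maximum-column-sum norm of `Ā`
is strictly less than one: `|||Ā|||₁ = max_j ∑_i |Ā i j| < 1`. -/
theorem matrix_column_stochastic_M_matrix_Abar_one_norm_lt_one
    (n : ℕ) (hn : 1 ≤ n) (A : Matrix (Fin n) (Fin n) ℝ)
    (hoff : ∀ i j, i ≠ j → A i j ≤ 0)
    (hdiag : ∀ i, A i i = 1 - ∑ j ∈ Finset.univ.erase i, A j i)
    (D : Matrix (Fin n) (Fin n) ℝ) (hD : D = Matrix.diagonal fun i => A i i)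
    (Abar : Matrix (Fin n) (Fin n) ℝ) (hAbar : Abar = (D - A) * D⁻¹) :
    Finset.univ.sup' (Finset.univ_nonempty_iff.mpr (Fin.pos_iff_nonempty.mp hn))
      (fun j => ∑ i, |Abar i j|) < 1 := by
  have hdiag_pos : ∀ j, 0 < A j j := fun j =>
    one_pos.trans_le (one_le_diag_of_offDiag_nonpos hoff hdiag j)
  rw [Finset.sup'_lt_iff]
  intro j _
  have hcol : ∑ i, |Abar i j| = (A j j - 1) / A j j := by
    simp_rw [hAbar, hD, mul_inv_diagonal_apply (fun i => (hdiag_pos i).ne'), abs_div, ← sum_div,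
      sum_abs_diagonal_diag_sub_apply hoff hdiag, abs_of_pos (hdiag_pos j)]
  rw [hcol, div_lt_one (hdiag_pos j)]
  linarith
end

section
/- Every complex eigenvalue λ of the matrix Ā (i.e., every element of the spectrum of Ā regarded as a complex matrix) satisfies |λ| < 1; in particular the spectral radius of Ā is strictly less than one. -/
/-!
`Ā` has nonnegative entries and its `j`-th column sums to `1 - 1 / A j j < 1`, because the columns
of `A` sum to `1` and `A j j ≥ 1`. Gershgorin's theorem applied to `Āᵀ` bounds the modulus of
every eigenvalue by a column sum of `|Ā|`, hence by a number below one.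
-/

open Matrix Finset

theorem Matrix.spectrum_transpose {R n : Type*} [CommRing R] [Fintype n] [DecidableEq n]
    (A : Matrix n n R) : spectrum R Aᵀ = spectrum R A := by
  ext μ
  rw [spectrum.mem_iff, spectrum.mem_iff, ← isUnit_transpose (algebraMap R _ μ - A),
    transpose_sub, algebraMap_eq_diagonal, diagonal_transpose]

theorem Matrix.inv_diagonal_of_ne_zero_s4 {K n : Type*} [Field K] [Fintype n] [DecidableEq n]
    {d : n → K} (hd : ∀ i, d i ≠ 0) : (diagonal d)⁻¹ = diagonal d⁻¹ :=
  inv_eq_left_inv <| by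
    rw [diagonal_mul_diagonal, ← diagonal_one]
    exact congrArg diagonal (funext fun i => inv_mul_cancel₀ (hd i))

section Gershgorin

variable {K n : Type*} [NormedField K] [Fintype n] [DecidableEq n] {A : Matrix n n K}

theorem Matrix.exists_norm_le_sum_col_norm_of_mem_spectrum {μ : K} (hμ : μ ∈ spectrum K A) :
    ∃ k, ‖μ‖ ≤ ∑ i, ‖A i k‖ := by
  rw [← spectrum_transpose, ← spectrum_toLin', ← Module.End.hasEigenvalue_iff_mem_spectrum]
    at hμ
  obtain ⟨k, hk⟩ := eigenvalue_mem_ball hμ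
  rw [mem_closedBall_iff_norm'] at hk
  simp only [transpose_apply] at hk
  refine ⟨k, ?_⟩
  calc ‖μ‖ ≤ ‖A k k‖ + ‖A k k - μ‖ := norm_le_insert _ _
    _ ≤ ‖A k k‖ + ∑ i ∈ univ.erase k, ‖A i k‖ := by gcongr
    _ = ∑ i, ‖A i k‖ := add_sum_erase _ (fun i => ‖A i k‖) (mem_univ k)

theorem Matrix.norm_lt_one_of_mem_spectrum_of_sum_col_norm_lt_one
    (hA : ∀ j, ∑ i, ‖A i j‖ < 1) {μ : K} (hμ : μ ∈ spectrum K A) : ‖μ‖ < 1 :=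
  let ⟨k, hk⟩ := exists_norm_le_sum_col_norm_of_mem_spectrum hμ
  hk.trans_lt (hA k)

end Gershgorin

section ColumnStochastic

variable {ι : Type*} [Fintype ι] [DecidableEq ι] {A : Matrix ι ι ℝ}

theorem sum_col_eq_one_of_diag_eq (hdiag : ∀ i, A i i = 1 - ∑ j ∈ univ.erase i, A j i)
    (j : ι) : ∑ i, A i j = 1 := by
  rw [← add_sum_erase _ _ (mem_univ j), hdiag j]
  ring

variable (hoff : ∀ i j, i ≠ j → A i j ≤ 0) (hcol : ∀ j, ∑ i, A i j = 1)
include hoff hcol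

theorem one_le_diag_of_sum_col_eq_one (j : ι) : 1 ≤ A j j := by
  have hoff_sum : ∑ i ∈ univ.erase j, A i j ≤ 0 :=
    sum_nonpos fun i hi => hoff i j (ne_of_mem_erase hi)
  linarith [hcol j, add_sum_erase _ (fun i => A i j) (mem_univ j)]

theorem sum_col_abs_diagonal_sub_mul_inv_lt_one (j : ι) :
    ∑ i, |((diagonal (fun i => A i i) - A) * (diagonal (fun i => A i i))⁻¹) i j| < 1 := by
  have hpos : ∀ i, 0 < A i i := fun i =>
    one_pos.trans_le (one_le_diag_of_sum_col_eq_one hoff hcol i)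
  have hnonneg : ∀ i, 0 ≤ (diagonal (fun i => A i i) - A) i j := fun i => by
    rcases eq_or_ne i j with rfl | hij
    · simp
    · simpa [diagonal_apply_ne _ hij] using hoff i j hij
  have hsum : ∑ i, (diagonal (fun i => A i i) - A) i j = A j j - 1 := by
    simp [sum_sub_distrib, diagonal_apply, hcol j]
  calc ∑ i, |((diagonal (fun i => A i i) - A) * (diagonal (fun i => A i i))⁻¹) i j|
      = (∑ i, (diagonal (fun i => A i i) - A) i j) * (A j j)⁻¹ := by
        rw [inv_diagonal_of_ne_zero_s4 fun i => (hpos i).ne', sum_mul]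
        refine sum_congr rfl fun i _ => ?_
        rw [mul_diagonal]
        exact abs_of_nonneg (mul_nonneg (hnonneg i) (inv_pos.2 (hpos j)).le)
    _ = 1 - (A j j)⁻¹ := by rw [hsum, sub_mul, mul_inv_cancel₀ (hpos j).ne', one_mul]
    _ < 1 := sub_lt_self 1 (inv_pos.2 (hpos j))

end ColumnStochastic

theorem matrix_column_stochastic_M_matrix_Abar_spectrum_lt_one_general
    (n : ℕ) (A : Matrix (Fin n) (Fin n) ℝ)
    (hoff : ∀ i j, i ≠ j → A i j ≤ 0)
    (hdiag : ∀ i, A i i = 1 - ∑ j ∈ Finset.univ.erase i, A j i)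
    (D : Matrix (Fin n) (Fin n) ℝ) (hD : D = Matrix.diagonal fun i => A i i)
    (Abar : Matrix (Fin n) (Fin n) ℝ) (hAbar : Abar = (D - A) * D⁻¹) :
    ∀ μ : ℂ, μ ∈ spectrum ℂ (Abar.map (fun x => (x : ℂ))) → ‖μ‖ < 1 := by
  subst hD hAbar
  have hcol := sum_col_eq_one_of_diag_eq hdiag
  intro μ hμ
  refine norm_lt_one_of_mem_spectrum_of_sum_col_norm_lt_one (fun j => ?_) hμ
  simpa only [map_apply, Complex.norm_real, Real.norm_eq_abs] using
    sum_col_abs_diagonal_sub_mul_inv_lt_one hoff hcol j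

/-- Let `A` be an `n × n` real matrix (`n ≥ 1`) with nonpositive off-diagonal entries
whose diagonal entries satisfy `A i i = 1 - ∑_{j ≠ i} A j i`.  With
`D = diag(A 1 1, …, A n n)` and `Ā = (D - A) * D⁻¹`, every complex eigenvalue `λ`
of `Ā` (i.e. every element of the spectrum of `Ā` regarded as a complex matrix)
satisfies `|λ| < 1`; in particular the spectral radius of `Ā` is less than one. -/
theorem matrix_column_stochastic_M_matrix_Abar_spectrum_lt_one
    (n : ℕ) (hn : 1 ≤ n) (A : Matrix (Fin n) (Fin n) ℝ)
    (hoff : ∀ i j, i ≠ j → A i j ≤ 0)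
    (hdiag : ∀ i, A i i = 1 - ∑ j ∈ Finset.univ.erase i, A j i)
    (D : Matrix (Fin n) (Fin n) ℝ) (hD : D = Matrix.diagonal fun i => A i i)
    (Abar : Matrix (Fin n) (Fin n) ℝ) (hAbar : Abar = (D - A) * D⁻¹) :
    ∀ μ : ℂ, μ ∈ spectrum ℂ (Abar.map (fun x => (x : ℂ))) → ‖μ‖ < 1 :=
  matrix_column_stochastic_M_matrix_Abar_spectrum_lt_one_general n A hoff hdiag D hD Abar hAbar
end

section
/- F has at least one fixed point: there exists x ∈ X with F(x) = x (Theorem 1, part 1). -/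
/-- **Theorem 1, part 1 (Berinde).** An almost contraction `F` on a nonempty complete
metric space `X` (i.e. there are `κ ∈ [0,1)` and `χ ≥ 0` with
`d(F x, F y) ≤ κ d(x, y) + χ d(y, F x)` for all `x, y`) has at least one fixed point. -/
theorem almost_contraction_exists_fixed_point
    {X : Type*} [MetricSpace X] [CompleteSpace X] [Nonempty X]
    (F : X → X) (κ χ : ℝ) (hκ0 : 0 ≤ κ) (hκ1 : κ < 1) (hχ : 0 ≤ χ)
    (hF : ∀ x y : X, dist (F x) (F y) ≤ κ * dist x y + χ * dist y (F x)) :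
    ∃ x : X, F x = x := by
  obtain ⟨x₀⟩ := ‹Nonempty X›
  set f : ℕ → X := fun n => F^[n] x₀ with hf
  have hstep : ∀ n, f (n + 1) = F (f n) := by
    intro n; simp [hf, Function.iterate_succ_apply']
  have hkey : ∀ z : X, dist (F z) (F (F z)) ≤ κ * dist z (F z) := by
    intro z
    have := hF z (F z)
    simpa using this
  have hgeo : ∀ n, dist (f n) (f (n + 1)) ≤ dist x₀ (F x₀) * κ ^ n := by
    intro n
    induction n with
    | zero => simp [hf]
    | succ n ih =>
      have h1 : dist (f (n + 1)) (f (n + 2)) ≤ κ * dist (f n) (f (n + 1)) := by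
        rw [hstep n, hstep (n + 1), hstep n]
        exact hkey (f n)
      calc dist (f (n + 1)) (f (n + 2)) ≤ κ * dist (f n) (f (n + 1)) := h1
        _ ≤ κ * (dist x₀ (F x₀) * κ ^ n) := by
            exact mul_le_mul_of_nonneg_left ih hκ0
        _ = dist x₀ (F x₀) * κ ^ (n + 1) := by ring
  have hC : CauchySeq f := cauchySeq_of_le_geometric κ (dist x₀ (F x₀)) hκ1 hgeo
  obtain ⟨x, hx⟩ := cauchySeq_tendsto_of_complete hC
  refine ⟨x, ?_⟩
  have hx' : Filter.Tendsto (fun n => f (n + 1)) Filter.atTop (nhds x) :=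
    hx.comp (Filter.tendsto_add_atTop_nat 1)
  have hdist : Filter.Tendsto (fun n => dist (f (n + 1)) (F x)) Filter.atTop (nhds 0) := by
    have hb : ∀ n, dist (f (n + 1)) (F x) ≤ κ * dist (f n) x + χ * dist x (f (n + 1)) := by
      intro n
      rw [hstep n]
      exact hF (f n) x
    have hlim : Filter.Tendsto (fun n => κ * dist (f n) x + χ * dist x (f (n + 1)))
        Filter.atTop (nhds 0) := by
      have h1 : Filter.Tendsto (fun n => dist (f n) x) Filter.atTop (nhds 0) :=
        tendsto_iff_dist_tendsto_zero.mp hx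
      have h2 : Filter.Tendsto (fun n => dist x (f (n + 1))) Filter.atTop (nhds 0) := by
        have := tendsto_iff_dist_tendsto_zero.mp hx'
        simpa [dist_comm] using this
      have := (h1.const_mul κ).add (h2.const_mul χ)
      simpa using this
    exact squeeze_zero (fun n => dist_nonneg) hb hlim
  have hFx : Filter.Tendsto (fun n => f (n + 1)) Filter.atTop (nhds (F x)) :=
    tendsto_iff_dist_tendsto_zero.mpr hdist
  exact tendsto_nhds_unique hFx hx'
end

section
/- For every initial point x₀ ∈ X, the Picard iteration defined by x_{n+1} = F(x_n) for n = 0, 1, 2, … converges to some point x* ∈ X, and this limit x* is a fixed point of F: F(x*) = x* (Theorem 1, part 2). -/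
open Filter

/-- **Theorem 1, part 2 (Berinde).** For an almost contraction `F` on a nonempty
complete metric space `X` (there are `κ ∈ [0,1)` and `χ ≥ 0` with
`d(F x, F y) ≤ κ d(x, y) + χ d(y, F x)` for all `x, y`), the Picard iteration
`x_{n+1} = F (x_n)` converges from any initial point `x₀` to some `x* ∈ X`,
and the limit `x*` is a fixed point of `F`. -/
theorem almost_contraction_picard_iteration_converges_to_fixed_point
    {X : Type*} [MetricSpace X] [CompleteSpace X] [Nonempty X]
    (F : X → X) (κ χ : ℝ) (hκ0 : 0 ≤ κ) (hκ1 : κ < 1) (hχ : 0 ≤ χ)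
    (hF : ∀ x y : X, dist (F x) (F y) ≤ κ * dist x y + χ * dist y (F x)) :
    ∀ x₀ : X, ∃ xs : X,
      Tendsto (fun n : ℕ => F^[n] x₀) atTop (nhds xs) ∧ F xs = xs := by
  intro x₀
  -- key: dist between consecutive iterates decays geometrically
  have key : ∀ x : X, dist (F x) (F (F x)) ≤ κ * dist x (F x) := by
    intro x
    have := hF x (F x)
    simpa using this
  have hgeo : ∀ n : ℕ, dist (F^[n] x₀) (F^[n+1] x₀) ≤ dist x₀ (F x₀) * κ ^ n := by
    intro n
    induction n with
    | zero => simp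
    | succ n ih =>
        have h1 : F^[n+1] x₀ = F (F^[n] x₀) := Function.iterate_succ_apply' F n x₀
        have h2 : F^[n+2] x₀ = F (F (F^[n] x₀)) := by
          rw [Function.iterate_succ_apply' F (n+1) x₀, h1]
        rw [h1, h2]
        calc dist (F (F^[n] x₀)) (F (F (F^[n] x₀)))
            ≤ κ * dist (F^[n] x₀) (F (F^[n] x₀)) := key _
          _ = κ * dist (F^[n] x₀) (F^[n+1] x₀) := by rw [h1]
          _ ≤ κ * (dist x₀ (F x₀) * κ ^ n) := by
              exact mul_le_mul_of_nonneg_left ih hκ0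
          _ = dist x₀ (F x₀) * κ ^ (n+1) := by ring
  have hC : CauchySeq (fun n : ℕ => F^[n] x₀) :=
    cauchySeq_of_le_geometric κ (dist x₀ (F x₀)) hκ1 hgeo
  obtain ⟨xs, hxs⟩ := cauchySeq_tendsto_of_complete hC
  refine ⟨xs, hxs, ?_⟩
  -- show F xs = xs
  have h1 : Tendsto (fun n : ℕ => F^[n+1] x₀) atTop (nhds xs) :=
    hxs.comp (tendsto_add_atTop_nat 1)
  have h2 : Tendsto (fun n : ℕ => dist (F^[n+1] x₀) (F xs)) atTop (nhds 0) := by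
    have hb : ∀ n : ℕ, dist (F^[n+1] x₀) (F xs)
        ≤ κ * dist (F^[n] x₀) xs + χ * dist xs (F^[n+1] x₀) := by
      intro n
      have := hF (F^[n] x₀) xs
      rw [← Function.iterate_succ_apply' F n x₀] at this
      exact this
    have hlim : Tendsto (fun n : ℕ => κ * dist (F^[n] x₀) xs
        + χ * dist xs (F^[n+1] x₀)) atTop (nhds 0) := by
      have t1 : Tendsto (fun n : ℕ => dist (F^[n] x₀) xs) atTop (nhds 0) :=
        tendsto_iff_dist_tendsto_zero.mp hxs
      have t2 : Tendsto (fun n : ℕ => dist xs (F^[n+1] x₀)) atTop (nhds 0) := by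
        have := tendsto_iff_dist_tendsto_zero.mp h1
        simpa [dist_comm] using this
      have := (t1.const_mul κ).add (t2.const_mul χ)
      simpa using this
    exact squeeze_zero (fun n => dist_nonneg) hb hlim
  have h3 : Tendsto (fun n : ℕ => F^[n+1] x₀) atTop (nhds (F xs)) :=
    tendsto_iff_dist_tendsto_zero.mpr h2
  have := tendsto_nhds_unique h3 h1
  exact this
end

section
/- The interference-channel weighted sum MSE equals the downlink weighted sum MSE, ξ^I = ξ^{DL}, if and only if β̄²·tr(η W^H R W) = Σ_{n=1}^N ψ_n (B B^H)_{nn} + Σ_{s=1}^S μ_s b_s^H b_s. (This is the symbol-wise WSMSE transfer condition (17).) -/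
open Matrix Finset

/-- **Symbol-wise WSMSE transfer condition (17).**  With the interference-channel
variables `V = β̄ W`, `T = B / β̄`, input-variance matrix `ζ = η`, unit MSE weights and
per-symbol noise covariances `Δ_s = Ψ + μ_s I_N`, the interference-channel weighted sum
MSE equals the downlink weighted sum MSE, `ξᴵ = ξᴰᴸ`, if and only if
`β̄² tr(η Wᴴ R W) = ∑_n ψ_n (B Bᴴ)_{nn} + ∑_s μ_s b_sᴴ b_s`. -/
theorem symbolwise_WSMSE_transfer_condition
    (N M S : ℕ) (hN : 1 ≤ N) (hM : 1 ≤ M) (hS : 1 ≤ S)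
    (H : Matrix (Fin N) (Fin M) ℂ) (B : Matrix (Fin N) (Fin S) ℂ)
    (W : Matrix (Fin M) (Fin S) ℂ) (R : Matrix (Fin M) (Fin M) ℂ)
    (η : Fin S → ℝ) (ψ : Fin N → ℝ) (μ : Fin S → ℝ)
    (βb : ℝ) (hβ : βb ≠ 0)
    (ηm : Matrix (Fin S) (Fin S) ℂ) (hηm : ηm = Matrix.diagonal fun s => (η s : ℂ))
    (V : Matrix (Fin M) (Fin S) ℂ) (hV : V = (βb : ℂ) • W)
    (T : Matrix (Fin N) (Fin S) ℂ) (hT : T = (βb : ℂ)⁻¹ • B)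
    (Γ : Matrix (Fin N) (Fin N) ℂ) (hΓ : Γ = H * V * ηm * Vᴴ * Hᴴ)
    (Δ : Fin S → Matrix (Fin N) (Fin N) ℂ)
    (hΔ : ∀ s, Δ s = (Matrix.diagonal fun i => (ψ i : ℂ)) + (μ s : ℂ) • 1)
    (ξI ξDL : ℂ)
    (hξI : ξI = Matrix.trace (Tᴴ * Γ * T - Tᴴ * H * V * ηm - ηm * Vᴴ * Hᴴ * T + ηm)
        + ∑ s, (star fun i => T i s) ⬝ᵥ ((Δ s) *ᵥ fun i => T i s))
    (hξDL : ξDL = Matrix.trace (ηm + ηm * Wᴴ * Hᴴ * B * Bᴴ * H * W + ηm * Wᴴ * R * W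
        - ηm * Wᴴ * Hᴴ * B - ηm * Bᴴ * H * W)) :
    ξI = ξDL ↔
      (βb : ℂ) ^ 2 * Matrix.trace (ηm * Wᴴ * R * W)
        = ∑ i, (ψ i : ℂ) * (B * Bᴴ) i i
          + ∑ s, (μ s : ℂ) * ((star fun i => B i s) ⬝ᵥ fun i => B i s) := by
  have hβc : (βb : ℂ) ≠ 0 := Complex.ofReal_ne_zero.mpr hβ
  -- collapse the smul coefficients
  have e1 : Tᴴ * Γ * T = Bᴴ * H * W * ηm * Wᴴ * Hᴴ * B := by
    subst hT hV hΓ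
    simp only [Matrix.conjTranspose_smul, Matrix.smul_mul, Matrix.mul_smul, smul_smul,
      Complex.star_def, map_inv₀, Complex.conj_ofReal, Matrix.mul_assoc]
    rw [show ((βb:ℂ))⁻¹ * ((βb:ℂ) * (βb:ℂ) * ((βb:ℂ))⁻¹) = 1 by field_simp, one_smul]
  have e2 : Tᴴ * H * V * ηm = Bᴴ * H * W * ηm := by
    subst hT hV
    simp only [Matrix.conjTranspose_smul, Matrix.smul_mul, Matrix.mul_smul, smul_smul,
      Complex.star_def, map_inv₀, Complex.conj_ofReal, Matrix.mul_assoc]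
    rw [mul_inv_cancel₀ hβc, one_smul]
  have e3 : ηm * Vᴴ * Hᴴ * T = ηm * Wᴴ * Hᴴ * B := by
    subst hT hV
    simp only [Matrix.conjTranspose_smul, Matrix.smul_mul, Matrix.mul_smul, smul_smul,
      Complex.star_def, map_inv₀, Complex.conj_ofReal, Matrix.mul_assoc]
    rw [inv_mul_cancel₀ hβc, one_smul]
  -- the noise/quadratic term
  have e4 : (∑ s, (star fun i => T i s) ⬝ᵥ ((Δ s) *ᵥ fun i => T i s))
      = ((βb : ℂ) ^ 2)⁻¹ * (∑ i, (ψ i : ℂ) * (B * Bᴴ) i i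
          + ∑ s, (μ s : ℂ) * ((star fun i => B i s) ⬝ᵥ fun i => B i s)) := by
    subst hT
    simp only [hΔ, dotProduct, Matrix.mulVec, Matrix.add_apply,
      Matrix.diagonal_apply, Matrix.smul_apply, Matrix.one_apply, Matrix.mul_apply,
      Matrix.conjTranspose_apply, Pi.star_apply, smul_eq_mul, star_mul',
      Complex.star_def, map_inv₀, Complex.conj_ofReal,
      mul_add, add_mul, ite_mul, mul_ite, mul_zero, zero_mul,
      Finset.sum_add_distrib, Finset.sum_ite_eq, Finset.mem_univ, if_true]
    congr 1
    · rw [Finset.sum_comm]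
      simp only [Finset.mul_sum]
      refine Finset.sum_congr rfl fun i _ => Finset.sum_congr rfl fun s _ => ?_
      field_simp
    · simp only [Finset.mul_sum]
      refine Finset.sum_congr rfl fun s _ => Finset.sum_congr rfl fun i _ => ?_
      field_simp
  -- cyclic trace identities
  have h1 : Matrix.trace (Bᴴ * H * W * ηm * Wᴴ * Hᴴ * B)
      = Matrix.trace (ηm * Wᴴ * Hᴴ * B * Bᴴ * H * W) := by
    rw [show Bᴴ * H * W * ηm * Wᴴ * Hᴴ * B = (Bᴴ * H * W) * (ηm * Wᴴ * Hᴴ * B) by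
        simp only [Matrix.mul_assoc], Matrix.trace_mul_comm,
      show (ηm * Wᴴ * Hᴴ * B) * (Bᴴ * H * W) = ηm * Wᴴ * Hᴴ * B * Bᴴ * H * W by
        simp only [Matrix.mul_assoc]]
  have h2 : Matrix.trace (Bᴴ * H * W * ηm) = Matrix.trace (ηm * Bᴴ * H * W) := by
    rw [Matrix.trace_mul_comm, show ηm * (Bᴴ * H * W) = ηm * Bᴴ * H * W by
      simp only [Matrix.mul_assoc]]
  -- put it together
  set a := Matrix.trace (ηm * Wᴴ * Hᴴ * B * Bᴴ * H * W) with ha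
  set c := Matrix.trace (ηm * Wᴴ * Hᴴ * B) with hc
  set d := Matrix.trace (ηm * Bᴴ * H * W) with hd
  set r := Matrix.trace (ηm * Wᴴ * R * W) with hr
  set e := Matrix.trace ηm with he
  set P := ∑ i, (ψ i : ℂ) * (B * Bᴴ) i i
      + ∑ s, (μ s : ℂ) * ((star fun i => B i s) ⬝ᵥ fun i => B i s) with hP
  have hI : ξI = a - d - c + e + ((βb : ℂ) ^ 2)⁻¹ * P := by
    rw [hξI, Matrix.trace_add, Matrix.trace_sub, Matrix.trace_sub, e1, e2, e3, e4,
      h1, h2]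
  have hD : ξDL = e + a + r - c - d := by
    rw [hξDL, Matrix.trace_sub, Matrix.trace_sub, Matrix.trace_add, Matrix.trace_add]
  rw [hI, hD]
  have hb2 : ((βb : ℂ) ^ 2) ≠ 0 := pow_ne_zero _ hβc
  constructor
  · intro h
    have h' : ((βb : ℂ) ^ 2)⁻¹ * P = r := by linear_combination h
    rw [← h']
    field_simp
  · intro h
    have h' : ((βb : ℂ) ^ 2)⁻¹ * P = r := by
      rw [← h]; field_simp
    linear_combination h'
end

section
/- The downlink weighted sum MSE of the transformed precoder/decoder pair equals the interference-channel weighted sum MSE, ξ^{DL}(B̃, W̃) = ξ^I, if and only if β²·Σ_{s=1}^S t_s^H (Ψ + μ_s I_N) t_s = tr(η V^H R V). (This is the reverse WSMSE transfer condition (21).) -/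
/-!
Rescaling the downlink pair to `(β T, V / β)` leaves the cross products `W̃ᴴ Hᴴ B̃` and `B̃ᴴ H W̃`
unchanged, and by cyclicity of the trace the terms of the downlink MSE built from them are exactly
the noise-free part of the interference-channel MSE. Only the receiver-noise term
`tr(η W̃ᴴ R W̃) = β⁻² tr(η Vᴴ R V)` moves, so the two MSEs agree iff it equals the
noise term `∑ₛ tₛᴴ Δₛ tₛ` of the interference channel.
-/

open Matrix

section

variable {α N M S : Type*} [CommRing α] [StarRing α] [Fintype N] [Fintype M] [Fintype S]

def downlinkWSMSE (η : Matrix S S α) (H : Matrix N M α) (R : Matrix M M α)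
    (B : Matrix N S α) (W : Matrix M S α) : α :=
  trace (η + η * Wᴴ * Hᴴ * B * Bᴴ * H * W + η * Wᴴ * R * W - η * Wᴴ * Hᴴ * B - η * Bᴴ * H * W)

def interferenceWSMSEWithoutNoise (η : Matrix S S α) (H : Matrix N M α) (V : Matrix M S α)
    (T : Matrix N S α) : α :=
  trace (Tᴴ * (H * V * η * Vᴴ * Hᴴ) * T - Tᴴ * H * V * η - η * Vᴴ * Hᴴ * T + η)

theorem downlinkWSMSE_smul_smul (η : Matrix S S α) (H : Matrix N M α) (R : Matrix M M α)
    (T : Matrix N S α) (V : Matrix M S α) {b w : α} (hbw : star w * b = 1) :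
    downlinkWSMSE η H R (b • T) (w • V)
      = interferenceWSMSEWithoutNoise η H V T + star w * w * trace (η * Vᴴ * R * V) := by
  have hwb : star b * w = 1 := by simpa [mul_comm] using congrArg star hbw
  have h_signal :
      trace (η * Vᴴ * Hᴴ * T * Tᴴ * H * V) = trace (Tᴴ * (H * V * η * Vᴴ * Hᴴ) * T) := by
    simpa only [Matrix.mul_assoc] using trace_mul_comm (η * Vᴴ * Hᴴ * T) (Tᴴ * H * V)
  have h_cross : trace (η * Tᴴ * H * V) = trace (Tᴴ * H * V * η) := by
    simpa only [Matrix.mul_assoc] using trace_mul_comm η (Tᴴ * H * V)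
  simp only [downlinkWSMSE, interferenceWSMSEWithoutNoise, conjTranspose_smul, Matrix.smul_mul,
    Matrix.mul_smul, smul_smul, trace_add, trace_sub, trace_smul, smul_eq_mul]
  rw [h_signal, h_cross]
  -- `(star w * b) * (star b * w) - 1 = (star w * b - 1) * (star b * w) + (star b * w - 1)`
  linear_combination
    (trace (Tᴴ * (H * V * η * Vᴴ * Hᴴ) * T) * star b * w - trace (η * Vᴴ * Hᴴ * T)) * hbw
      + (trace (Tᴴ * (H * V * η * Vᴴ * Hᴴ) * T) - trace (Tᴴ * H * V * η)) * hwb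

end

theorem reverse_WSMSE_transfer_condition_general
    (N M S : ℕ)
    (H : Matrix (Fin N) (Fin M) ℂ) (V : Matrix (Fin M) (Fin S) ℂ)
    (T : Matrix (Fin N) (Fin S) ℂ) (R : Matrix (Fin M) (Fin M) ℂ)
    (βb : ℝ) (hβ : βb ≠ 0)
    (ηm : Matrix (Fin S) (Fin S) ℂ)
    (Γ : Matrix (Fin N) (Fin N) ℂ) (hΓ : Γ = H * V * ηm * Vᴴ * Hᴴ)
    (Δ : Fin S → Matrix (Fin N) (Fin N) ℂ)
    (Bt : Matrix (Fin N) (Fin S) ℂ) (hBt : Bt = (βb : ℂ) • T)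
    (Wt : Matrix (Fin M) (Fin S) ℂ) (hWt : Wt = (βb : ℂ)⁻¹ • V)
    (ξI ξDL : ℂ)
    (hξI : ξI = Matrix.trace (Tᴴ * Γ * T - Tᴴ * H * V * ηm - ηm * Vᴴ * Hᴴ * T + ηm)
        + ∑ s, (star fun i => T i s) ⬝ᵥ ((Δ s) *ᵥ fun i => T i s))
    (hξDL : ξDL = Matrix.trace (ηm + ηm * Wtᴴ * Hᴴ * Bt * Btᴴ * H * Wt
        + ηm * Wtᴴ * R * Wt - ηm * Wtᴴ * Hᴴ * Bt - ηm * Btᴴ * H * Wt)) :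
    ξDL = ξI ↔
      (βb : ℂ) ^ 2 * ∑ s, (star fun i => T i s) ⬝ᵥ ((Δ s) *ᵥ fun i => T i s)
        = Matrix.trace (ηm * Vᴴ * R * V) := by
  have hβc : (βb : ℂ) ≠ 0 := Complex.ofReal_ne_zero.mpr hβ
  have h_real : star ((βb : ℂ)⁻¹) = (βb : ℂ)⁻¹ := by simp [Complex.conj_ofReal]
  have hDL : ξDL = interferenceWSMSEWithoutNoise ηm H V T
      + ((βb : ℂ) ^ 2)⁻¹ * trace (ηm * Vᴴ * R * V) := by
    have h := downlinkWSMSE_smul_smul ηm H R T V (by rw [h_real, inv_mul_cancel₀ hβc])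
    rw [h_real, ← sq, inv_pow] at h
    rw [hξDL, hBt, hWt]
    exact h
  have hI : ξI = interferenceWSMSEWithoutNoise ηm H V T
      + ∑ s, (star fun i => T i s) ⬝ᵥ ((Δ s) *ᵥ fun i => T i s) := by
    rw [hξI, hΓ]
    rfl
  rw [hDL, hI, add_right_inj, inv_mul_eq_iff_eq_mul₀ (pow_ne_zero 2 hβc), eq_comm]

/-- **Reverse WSMSE transfer condition (21).**  With the transformed downlink precoder
and decoder `B̃ = β T`, `W̃ = V / β`, the downlink weighted sum MSE of the transformed
pair equals the interference-channel weighted sum MSE, `ξᴰᴸ(B̃, W̃) = ξᴵ`, if and only if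
`β² ∑_s t_sᴴ (Ψ + μ_s I_N) t_s = tr(η Vᴴ R V)`. -/
theorem reverse_WSMSE_transfer_condition
    (N M S : ℕ) (hN : 1 ≤ N) (hM : 1 ≤ M) (hS : 1 ≤ S)
    (H : Matrix (Fin N) (Fin M) ℂ) (V : Matrix (Fin M) (Fin S) ℂ)
    (T : Matrix (Fin N) (Fin S) ℂ) (R : Matrix (Fin M) (Fin M) ℂ)
    (η : Fin S → ℝ) (ψ : Fin N → ℝ) (μ : Fin S → ℝ)
    (βb : ℝ) (hβ : βb ≠ 0)
    (ηm : Matrix (Fin S) (Fin S) ℂ) (hηm : ηm = Matrix.diagonal fun s => (η s : ℂ))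
    (Γ : Matrix (Fin N) (Fin N) ℂ) (hΓ : Γ = H * V * ηm * Vᴴ * Hᴴ)
    (Δ : Fin S → Matrix (Fin N) (Fin N) ℂ)
    (hΔ : ∀ s, Δ s = (Matrix.diagonal fun i => (ψ i : ℂ)) + (μ s : ℂ) • 1)
    (Bt : Matrix (Fin N) (Fin S) ℂ) (hBt : Bt = (βb : ℂ) • T)
    (Wt : Matrix (Fin M) (Fin S) ℂ) (hWt : Wt = (βb : ℂ)⁻¹ • V)
    (ξI ξDL : ℂ)
    (hξI : ξI = Matrix.trace (Tᴴ * Γ * T - Tᴴ * H * V * ηm - ηm * Vᴴ * Hᴴ * T + ηm)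
        + ∑ s, (star fun i => T i s) ⬝ᵥ ((Δ s) *ᵥ fun i => T i s))
    (hξDL : ξDL = Matrix.trace (ηm + ηm * Wtᴴ * Hᴴ * Bt * Btᴴ * H * Wt
        + ηm * Wtᴴ * R * Wt - ηm * Wtᴴ * Hᴴ * Bt - ηm * Btᴴ * H * Wt)) :
    ξDL = ξI ↔
      (βb : ℂ) ^ 2 * ∑ s, (star fun i => T i s) ⬝ᵥ ((Δ s) *ᵥ fun i => T i s)
        = Matrix.trace (ηm * Vᴴ * R * V) :=
  reverse_WSMSE_transfer_condition_general N M S H V T R βb hβ ηm Γ hΓ Δ Bt hBt Wt hWt ξI ξDL hξI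
    hξDL
end

section
/- For a fixed pair (k, s), the downlink MSE of symbol (k, s) equals its interference-channel MSE, ξ^{DL}_{ks} = ξ^{I}_{ks}, if and only if β̄_{ks}² · w_{ks}^H ( H_k^H ( Σ_{(i,j)≠(k,s)} b_{ij} b_{ij}^H ) H_k + R_k ) w_{ks} = b_{ks}^H ( Σ_{(i,j)≠(k,s)} β̄_{ij}² H_i w_{ij} w_{ij}^H H_i^H + Ψ + μ_{ks} I_N ) b_{ks}. (This is the symbol-wise MSE transfer condition (40).) -/
/-!
Split the `(k, s)` term off the full sums `∑ b bᴴ` and `Γ_c`. Because `β̄_{ks}` is real, the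
scalings `v = β̄ w` and `t = b / β̄` cancel in the cross terms, and both MSEs take the form
`Q + c₁ c₂ - c₁ - c₂ + 1` with `c₁ = wᴴ Hᴴ b`, `c₂ = bᴴ H w`. They differ only in `Q`, which is
`wᴴ (Hᴴ B' H + R) w` in the downlink and `β̄⁻² bᴴ (Γ' + Ψ + μ I) b` in the interference channel.
-/

open Matrix Finset

section

variable {m n α : Type*} [Fintype m] [Fintype n]

lemma dotProduct_vecMulVec_mulVec [CommSemiring α] (x u : m → α) (v y : n → α) :
    x ⬝ᵥ (vecMulVec u v *ᵥ y) = (x ⬝ᵥ u) * (v ⬝ᵥ y) := by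
  rw [dotProduct_mulVec, vecMul_vecMulVec, smul_dotProduct, smul_eq_mul]

lemma star_mulVec_dotProduct [NonUnitalSemiring α] [StarRing α] (A : Matrix m n α) (x : n → α)
    (y : m → α) :
    star (A *ᵥ x) ⬝ᵥ y = star x ⬝ᵥ (Aᴴ *ᵥ y) := by
  rw [star_mulVec, ← dotProduct_mulVec]

variable [CommSemiring α] [StarRing α]

lemma star_smul_dotProduct_mulVec_smul (c d : α) (A : Matrix m n α) (x : m → α) (y : n → α) :
    star (c • x) ⬝ᵥ (A *ᵥ (d • y)) = star c * d * (star x ⬝ᵥ (A *ᵥ y)) := by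
  rw [star_smul, mulVec_smul, smul_dotProduct, dotProduct_smul, smul_eq_mul, smul_eq_mul]
  ring

lemma star_dotProduct_conjTranspose_mul_add_vecMulVec (H : Matrix m n α) (B : Matrix m m α)
    (R : Matrix n n α) (b : m → α) (w : n → α) :
    star w ⬝ᵥ ((Hᴴ * (B + vecMulVec b (star b)) * H + R) *ᵥ w)
      = star w ⬝ᵥ ((Hᴴ * B * H + R) *ᵥ w) + star w ⬝ᵥ (Hᴴ *ᵥ b) * (star b ⬝ᵥ (H *ᵥ w)) := by
  rw [Matrix.mul_add, Matrix.add_mul, add_right_comm, add_mulVec, dotProduct_add,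
    mul_vecMulVec, vecMulVec_mul, dotProduct_vecMulVec_mulVec, ← dotProduct_mulVec]

lemma star_dotProduct_add_smul_vecMulVec_mulVec (G : Matrix m m α) (c : α) (H : Matrix m n α)
    (w : n → α) (x : m → α) :
    star x ⬝ᵥ ((G + c • vecMulVec (H *ᵥ w) (star (H *ᵥ w))) *ᵥ x)
      = star x ⬝ᵥ (G *ᵥ x) + c * (star w ⬝ᵥ (Hᴴ *ᵥ x) * (star x ⬝ᵥ (H *ᵥ w))) := by
  rw [add_mulVec, dotProduct_add, smul_mulVec, dotProduct_smul, dotProduct_vecMulVec_mulVec,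
    star_mulVec_dotProduct, smul_eq_mul, mul_comm (star x ⬝ᵥ _)]

end

theorem symbolwise_MSE_transfer_condition_general
    (N K : ℕ)
    (M S : Fin K → ℕ)
    (H : ∀ k : Fin K, Matrix (Fin N) (Fin (M k)) ℂ)
    (R : ∀ k : Fin K, Matrix (Fin (M k)) (Fin (M k)) ℂ)
    (b : ∀ k : Fin K, Fin (S k) → (Fin N → ℂ))
    (w : ∀ k : Fin K, Fin (S k) → (Fin (M k) → ℂ))
    (βb : ∀ k : Fin K, Fin (S k) → ℝ) (hβ : ∀ k s, βb k s ≠ 0)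
    (μ : ∀ k : Fin K, Fin (S k) → ℝ)
    (Ψm : Matrix (Fin N) (Fin N) ℂ)
    (k : Fin K) (s : Fin (S k))
    (v : Fin (M k) → ℂ) (hv : v = (βb k s : ℂ) • w k s)
    (t : Fin N → ℂ) (ht : t = (βb k s : ℂ)⁻¹ • b k s)
    -- the sum of `b_{ij} b_{ij}ᴴ` over all symbol pairs `(i, j)`
    (BBall : Matrix (Fin N) (Fin N) ℂ)
    (hBBall : BBall = ∑ p : Σ i : Fin K, Fin (S i),
        vecMulVec (b p.1 p.2) (star (b p.1 p.2)))
    -- the sum of `b_{ij} b_{ij}ᴴ` over all symbol pairs `(i, j) ≠ (k, s)`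
    (BBerase : Matrix (Fin N) (Fin N) ℂ)
    (hBBerase : BBerase = ∑ p ∈ Finset.univ.erase (⟨k, s⟩ : Σ i : Fin K, Fin (S i)),
        vecMulVec (b p.1 p.2) (star (b p.1 p.2)))
    -- `Γ_c = ∑_{(i,j)} β̄_{ij}² H_i w_{ij} w_{ij}ᴴ H_iᴴ`
    (Γ : Matrix (Fin N) (Fin N) ℂ)
    (hΓ : Γ = ∑ p : Σ i : Fin K, Fin (S i), ((βb p.1 p.2 : ℂ)) ^ 2 •
        vecMulVec ((H p.1) *ᵥ w p.1 p.2) (star ((H p.1) *ᵥ w p.1 p.2)))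
    -- `∑_{(i,j) ≠ (k,s)} β̄_{ij}² H_i w_{ij} w_{ij}ᴴ H_iᴴ`
    (Γerase : Matrix (Fin N) (Fin N) ℂ)
    (hΓerase : Γerase = ∑ p ∈ Finset.univ.erase (⟨k, s⟩ : Σ i : Fin K, Fin (S i)),
        ((βb p.1 p.2 : ℂ)) ^ 2 •
          vecMulVec ((H p.1) *ᵥ w p.1 p.2) (star ((H p.1) *ᵥ w p.1 p.2)))
    (ξDL ξI : ℂ)
    (hξDL : ξDL = star (w k s) ⬝ᵥ (((H k)ᴴ * BBall * (H k) + R k) *ᵥ w k s)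
        - star (w k s) ⬝ᵥ ((H k)ᴴ *ᵥ b k s)
        - star (b k s) ⬝ᵥ ((H k) *ᵥ w k s) + 1)
    (hξI : ξI = star t ⬝ᵥ (Γ *ᵥ t)
        + star t ⬝ᵥ ((Ψm + (μ k s : ℂ) • 1) *ᵥ t)
        - star t ⬝ᵥ ((H k) *ᵥ v)
        - star v ⬝ᵥ ((H k)ᴴ *ᵥ t) + 1) :
    ξDL = ξI ↔
      (βb k s : ℂ) ^ 2 *
          (star (w k s) ⬝ᵥ (((H k)ᴴ * BBerase * (H k) + R k) *ᵥ w k s))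
        = star (b k s) ⬝ᵥ ((Γerase + Ψm + (μ k s : ℂ) • 1) *ᵥ b k s) := by
  have hmem : (⟨k, s⟩ : Σ i : Fin K, Fin (S i)) ∈ univ := mem_univ _
  have hBB : BBall = BBerase + vecMulVec (b k s) (star (b k s)) := by
    rw [hBBall, hBBerase, ← sum_erase_add _ _ hmem]
  have hΓsplit : Γ = Γerase + (βb k s : ℂ) ^ 2 •
      vecMulVec (H k *ᵥ w k s) (star (H k *ᵥ w k s)) := by
    rw [hΓ, hΓerase, ← sum_erase_add _ _ hmem]
  set β : ℂ := (βb k s : ℂ)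
  have hβ0 : β ≠ 0 := Complex.ofReal_ne_zero.mpr (hβ k s)
  have hβstar : star β = β := Complex.conj_ofReal _
  set c₁ := star (w k s) ⬝ᵥ ((H k)ᴴ *ᵥ b k s)
  set c₂ := star (b k s) ⬝ᵥ (H k *ᵥ w k s)
  have hDL : ξDL = star (w k s) ⬝ᵥ (((H k)ᴴ * BBerase * H k + R k) *ᵥ w k s)
      + c₁ * c₂ - c₁ - c₂ + 1 := by
    rw [hξDL, hBB, star_dotProduct_conjTranspose_mul_add_vecMulVec]
  have hI : ξI = β⁻¹ ^ 2 * star (b k s) ⬝ᵥ ((Γerase + Ψm + (μ k s : ℂ) • 1) *ᵥ b k s)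
      + c₁ * c₂ - c₂ - c₁ + 1 := by
    rw [hξI, hv, ht, hΓsplit]
    simp only [star_smul_dotProduct_mulVec_smul, star_inv₀, hβstar]
    rw [star_dotProduct_add_smul_vecMulVec_mulVec, add_assoc Γerase, add_mulVec Γerase,
      dotProduct_add]
    field_simp
    ring
  rw [hDL, hI, ← eq_inv_mul_iff_mul_eq₀ (pow_ne_zero 2 hβ0), inv_pow]
  constructor <;> intro h <;> linear_combination h

/-- **Symbol-wise MSE transfer condition (40).**  For a fixed symbol `(k, s)`, with the
interference-channel variables `v_{ks} = β̄_{ks} w_{ks}`, `t_{ks} = b_{ks} / β̄_{ks}`,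
unit input variances and noise covariances `Δ_{ks} = Ψ + μ_{ks} I_N`, the downlink MSE
of symbol `(k, s)` equals its interference-channel MSE, `ξᴰᴸ_{ks} = ξᴵ_{ks}`, if and
only if
`β̄_{ks}² wᴴ (Hₖᴴ (∑_{(i,j) ≠ (k,s)} b_{ij} b_{ij}ᴴ) Hₖ + Rₖ) w
  = bᴴ (∑_{(i,j) ≠ (k,s)} β̄_{ij}² H_i w_{ij} w_{ij}ᴴ H_iᴴ + Ψ + μ_{ks} I_N) b`. -/
theorem symbolwise_MSE_transfer_condition
    (N K : ℕ) (hN : 1 ≤ N) (hK : 1 ≤ K)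
    (M S : Fin K → ℕ)
    (H : ∀ k : Fin K, Matrix (Fin N) (Fin (M k)) ℂ)
    (R : ∀ k : Fin K, Matrix (Fin (M k)) (Fin (M k)) ℂ)
    (b : ∀ k : Fin K, Fin (S k) → (Fin N → ℂ))
    (w : ∀ k : Fin K, Fin (S k) → (Fin (M k) → ℂ))
    (βb : ∀ k : Fin K, Fin (S k) → ℝ) (hβ : ∀ k s, βb k s ≠ 0)
    (μ : ∀ k : Fin K, Fin (S k) → ℝ) (ψ : Fin N → ℝ)
    (Ψm : Matrix (Fin N) (Fin N) ℂ) (hΨm : Ψm = Matrix.diagonal fun i => (ψ i : ℂ))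
    (k : Fin K) (s : Fin (S k))
    (v : Fin (M k) → ℂ) (hv : v = (βb k s : ℂ) • w k s)
    (t : Fin N → ℂ) (ht : t = (βb k s : ℂ)⁻¹ • b k s)
    -- the sum of `b_{ij} b_{ij}ᴴ` over all symbol pairs `(i, j)`
    (BBall : Matrix (Fin N) (Fin N) ℂ)
    (hBBall : BBall = ∑ p : Σ i : Fin K, Fin (S i),
        vecMulVec (b p.1 p.2) (star (b p.1 p.2)))
    -- the sum of `b_{ij} b_{ij}ᴴ` over all symbol pairs `(i, j) ≠ (k, s)`
    (BBerase : Matrix (Fin N) (Fin N) ℂ)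
    (hBBerase : BBerase = ∑ p ∈ Finset.univ.erase (⟨k, s⟩ : Σ i : Fin K, Fin (S i)),
        vecMulVec (b p.1 p.2) (star (b p.1 p.2)))
    -- `Γ_c = ∑_{(i,j)} β̄_{ij}² H_i w_{ij} w_{ij}ᴴ H_iᴴ`
    (Γ : Matrix (Fin N) (Fin N) ℂ)
    (hΓ : Γ = ∑ p : Σ i : Fin K, Fin (S i), ((βb p.1 p.2 : ℂ)) ^ 2 •
        vecMulVec ((H p.1) *ᵥ w p.1 p.2) (star ((H p.1) *ᵥ w p.1 p.2)))
    -- `∑_{(i,j) ≠ (k,s)} β̄_{ij}² H_i w_{ij} w_{ij}ᴴ H_iᴴ`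
    (Γerase : Matrix (Fin N) (Fin N) ℂ)
    (hΓerase : Γerase = ∑ p ∈ Finset.univ.erase (⟨k, s⟩ : Σ i : Fin K, Fin (S i)),
        ((βb p.1 p.2 : ℂ)) ^ 2 •
          vecMulVec ((H p.1) *ᵥ w p.1 p.2) (star ((H p.1) *ᵥ w p.1 p.2)))
    (ξDL ξI : ℂ)
    (hξDL : ξDL = star (w k s) ⬝ᵥ (((H k)ᴴ * BBall * (H k) + R k) *ᵥ w k s)
        - star (w k s) ⬝ᵥ ((H k)ᴴ *ᵥ b k s)
        - star (b k s) ⬝ᵥ ((H k) *ᵥ w k s) + 1)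
    (hξI : ξI = star t ⬝ᵥ (Γ *ᵥ t)
        + star t ⬝ᵥ ((Ψm + (μ k s : ℂ) • 1) *ᵥ t)
        - star t ⬝ᵥ ((H k) *ᵥ v)
        - star v ⬝ᵥ ((H k)ᴴ *ᵥ t) + 1) :
    ξDL = ξI ↔
      (βb k s : ℂ) ^ 2 *
          (star (w k s) ⬝ᵥ (((H k)ᴴ * BBerase * (H k) + R k) *ᵥ w k s))
        = star (b k s) ⬝ᵥ ((Γerase + Ψm + (μ k s : ℂ) • 1) *ᵥ b k s) :=
  symbolwise_MSE_transfer_condition_general N K M S H R b w βb hβ μ Ψm k s v hv t ht BBall hBBall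
    BBerase hBBerase Γ hΓ Γerase hΓerase ξDL ξI hξDL hξI
end
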